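/- Let X ⊆ ℤ/nℤ be a finite nonempty set with |X + X| ≤ σ|X| and |X| ≥ dim_F(X). Then dim_F(X) + 1 ≤ 2σ, where dim_F(X) is the Freĭman dimension of X. -/

import Mathlib

/-!
Freĭman's lemma: if the affine span of a finite set `A ⊆ ℝ^N` has dimension `d`, then
`2|A|(d + 1) ≤ 2|A + A| + d(d + 1)`. Order `ℝ^N` lexicographically and remove the largest
point `v`. The sums `v + a`, `a ∈ A`, that are not sums of two points of `A \ {v}` are new.
If the dimension drops, all `|A|` of them are new. Otherwise at least `d + 1` are: if `v + a`
is old, say `v + a = x + y`, then `x, y > a` and `a - v = (x - v) + (y - v)`, so by downward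
induction the differences `a - v` over the new partners `a` already span.

A Freĭman isomorphism onto a full-rank subset of `ℤ^d` preserves `|X|` and `|X + X|`, so the
inequality holds with `d = dim_F(X)`; with `d ≤ |X|` and `|X + X| ≤ σ|X|` it gives
`|X|(d + 1) ≤ 2σ|X|`.
-/

open Classical Pointwise

/-- The Freĭman dimension of a finite set `X` in an abelian group: the largest `d`
such that some full-rank finite subset of `ℤ^d` is Freĭman isomorphic (of order 2)
to `X`. -/
noncomputable def freimanDim {G : Type*} [AddCommGroup G] (X : Finset G) : ℕ :=
  sSup {d : ℕ | ∃ (Y : Finset (Fin d → ℤ)) (φ : G → (Fin d → ℤ)),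
    IsAddFreimanIso 2 (X : Set G) (Y : Set (Fin d → ℤ)) φ ∧
    Module.finrank ℝ
      (affineSpan ℝ ((fun (y : Fin d → ℤ) (i : Fin d) => (y i : ℝ)) ''
        (Y : Set (Fin d → ℤ)))).direction = d}

open Finset Module

theorem Finset.lt_of_mem_erase_of_isGreatest {α : Type*} [LinearOrder α] {A : Finset α} {v z : α}
    (hv : IsGreatest (A : Set α) v) (hz : z ∈ A.erase v) : z < v :=
  (hv.2 (mem_of_mem_erase hz)).lt_of_ne (ne_of_mem_erase hz)

section FreimanLemma

variable {K V : Type*} [DivisionRing K] [AddCommGroup V] [Module K V]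

theorem finrank_vectorSpan_lt_card {s : Finset V} (hs : s.Nonempty) :
    finrank K (vectorSpan K (s : Set V)) < #s := by
  have hpos := hs.card_pos
  have h := finrank_vectorSpan_image_finset_le K id s (n := #s - 1) (by omega)
  rw [image_id] at h
  omega

section NewSums

variable [DecidableEq V]

def newSumPartners (A : Finset V) (v : V) : Finset V :=
  A.filter fun a => v + a ∉ A.erase v + A.erase v

theorem card_add_card_newSumPartners_le (A : Finset V) {v : V} (hv : v ∈ A) :
    #(A.erase v + A.erase v) + #(newSumPartners A v) ≤ #(A + A) := by
  have hdisj : Disjoint (A.erase v + A.erase v) ((newSumPartners A v).image (v + ·)) := by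
    rw [disjoint_right]
    intro _ hb
    obtain ⟨a, ha, rfl⟩ := mem_image.1 hb
    exact (mem_filter.1 ha).2
  calc #(A.erase v + A.erase v) + #(newSumPartners A v)
      = #(A.erase v + A.erase v ∪ (newSumPartners A v).image (v + ·)) := by
        rw [card_union_of_disjoint hdisj, card_image_of_injective _ (add_right_injective v)]
    _ ≤ #(A + A) := by
        refine card_le_card (union_subset (add_subset_add (erase_subset v A) (erase_subset v A)) ?_)
        intro _ hb
        obtain ⟨a, ha, rfl⟩ := mem_image.1 hb
        exact add_mem_add hv (filter_subset _ A ha)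

end NewSums

variable [LinearOrder V] [IsOrderedCancelAddMonoid V]

theorem lt_of_add_eq_add_of_lt {x y v a : V} (h : x + y = v + a) (hy : y < v) : a < x := by
  refine lt_of_add_lt_add_left (a := v) ?_
  calc v + a = x + y := h.symm
    _ < x + v := add_lt_add_right hy x
    _ = v + x := add_comm x v

theorem mem_newSumPartners_self {A : Finset V} {v : V} (hv : IsGreatest (A : Set V) v) :
    v ∈ newSumPartners A v := by
  refine mem_filter.2 ⟨hv.1, fun hsum => ?_⟩
  obtain ⟨x, hx, y, hy, hxy⟩ := mem_add.1 hsum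
  exact (add_lt_add (lt_of_mem_erase_of_isGreatest hv hx)
    (lt_of_mem_erase_of_isGreatest hv hy)).ne hxy

theorem sub_mem_span_newSumPartners {A : Finset V} {v : V} (hv : IsGreatest (A : Set V) v)
    {a : V} (ha : a ∈ A) :
    a - v ∈ Submodule.span K ((· - v) '' (newSumPartners A v : Set V)) := by
  refine (A.finite_toSet.wellFoundedOn (r := (· > ·))).induction ha
    (P := fun b => b - v ∈ Submodule.span K ((· - v) '' (newSumPartners A v : Set V)))
    fun b hb ih => ?_
  by_cases hbS : b ∈ newSumPartners A v
  · exact Submodule.subset_span ⟨b, hbS, rfl⟩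
  obtain ⟨x, hx, y, hy, hxy⟩ := mem_add.1 (not_not.1 fun h => hbS (mem_filter.2 ⟨hb, h⟩))
  have hbx : b < x := lt_of_add_eq_add_of_lt hxy (lt_of_mem_erase_of_isGreatest hv hy)
  have hby : b < y :=
    lt_of_add_eq_add_of_lt ((add_comm y x).trans hxy) (lt_of_mem_erase_of_isGreatest hv hx)
  have hsplit : b - v = (x - v) + (y - v) := by
    calc b - v = v + b - v - v := by abel
      _ = (x - v) + (y - v) := by rw [← hxy]; abel
  rw [hsplit]
  exact add_mem (ih x (mem_of_mem_erase hx) hbx) (ih y (mem_of_mem_erase hy) hby)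

theorem finrank_vectorSpan_lt_card_newSumPartners {A : Finset V} {v : V}
    (hv : IsGreatest (A : Set V) v) :
    finrank K (vectorSpan K (A : Set V)) < #(newSumPartners A v) := by
  have hS := mem_newSumPartners_self hv
  have hle : vectorSpan K (A : Set V) ≤ vectorSpan K (newSumPartners A v : Set V) := by
    rw [vectorSpan_eq_span_vsub_set_right K hv.1, vectorSpan_eq_span_vsub_set_right K hS,
      Submodule.span_le]
    rintro _ ⟨a, ha, rfl⟩
    exact sub_mem_span_newSumPartners hv ha
  have := finiteDimensional_vectorSpan_of_finite K (newSumPartners A v).finite_toSet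
  exact (Submodule.finrank_mono hle).trans_lt (finrank_vectorSpan_lt_card ⟨v, hS⟩)

theorem newSumPartners_eq_self_of_finrank_lt {A : Finset V} {v : V} (hv : IsGreatest (A : Set V) v)
    (hlt : finrank K (vectorSpan K (A.erase v : Set V)) < finrank K (vectorSpan K (A : Set V))) :
    newSumPartners A v = A := by
  refine filter_true_of_mem fun a ha hsum => ?_
  rcases eq_or_ne a v with rfl | hav
  · exact (mem_filter.1 (mem_newSumPartners_self hv)).2 hsum
  obtain ⟨x, hx, y, hy, hxy⟩ := mem_add.1 hsum
  have hvx : (y - a) +ᵥ x = v := by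
    calc (y - a) +ᵥ x = x + y - a := by rw [vadd_eq_add]; abel
      _ = v := by rw [hxy]; abel
  have hmem : v ∈ affineSpan K (A.erase v : Set V) := by
    have hdir : y - a ∈ (affineSpan K (A.erase v : Set V)).direction := by
      rw [direction_affineSpan]
      exact vsub_mem_vectorSpan K hy (mem_erase.2 ⟨hav, ha⟩)
    simpa only [hvx] using AffineSubspace.vadd_mem_of_mem_direction hdir (mem_affineSpan K hx)
  refine hlt.ne ?_
  rw [← insert_erase hv.1, coe_insert, vectorSpan_insert_eq_vectorSpan hmem, erase_insert_eq_erase,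
    erase_idem]

theorem freiman_lemma {d : ℕ} (A : Finset V) (hd : finrank K (vectorSpan K (A : Set V)) = d) :
    2 * #A * (d + 1) ≤ 2 * #(A + A) + d * (d + 1) := by
  subst hd
  induction A using Finset.strongInduction with
  | _ A ih =>
  rcases A.eq_empty_or_nonempty with rfl | hA
  · simp
  set v := A.max' hA
  have hv : IsGreatest (A : Set V) v := A.isGreatest_max' hA
  have hIH := ih (A.erase v) (erase_ssubset hv.1)
  have hcard : #(A.erase v) + 1 = #A := card_erase_add_one hv.1
  have hsums := card_add_card_newSumPartners_le A hv.1
  set d := finrank K (vectorSpan K (A : Set V))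
  set d' := finrank K (vectorSpan K (A.erase v : Set V))
  have hd'd : d' ≤ d := by
    have := finiteDimensional_vectorSpan_of_finite K A.finite_toSet
    exact Submodule.finrank_mono (vectorSpan_mono K (coe_subset.2 (erase_subset v A)))
  rcases hd'd.lt_or_eq with hlt | heq
  · have hdd' : d = d' + 1 := by
      refine le_antisymm ?_ hlt
      have := finrank_vectorSpan_insert_le_set K (A.erase v : Set V) v
      rwa [← coe_insert, insert_erase hv.1] at this
    rw [newSumPartners_eq_self_of_finrank_lt hv hlt] at hsums
    rw [hdd', ← hcard]
    linarith
  · have hS : d < #(newSumPartners A v) := finrank_vectorSpan_lt_card_newSumPartners hv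
    rw [heq] at hIH
    rw [← hcard]
    linarith

end FreimanLemma

theorem freiman_lemma_pi {K : Type*} [Field K] [LinearOrder K] [IsStrictOrderedRing K] {N d : ℕ}
    (A : Finset (Fin N → K)) (hd : finrank K (vectorSpan K (A : Set (Fin N → K))) = d) :
    2 * #A * (d + 1) ≤ 2 * #(A + A) + d * (d + 1) := by
  set e := toLexLinearEquiv K (Fin N → K)
  have hspan : vectorSpan K (e '' A) = (vectorSpan K (A : Set (Fin N → K))).map (e : _ →ₗ[K] _) :=
    (e.toLinearMap.toAffineMap.map_vectorSpan).symm
  have h := freiman_lemma (A.image e) (by rw [coe_image, hspan, e.finrank_map_eq, hd])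
  rw [card_image_of_injective _ e.injective] at h
  -- `image_add` uses other (equal, but not syntactically) `Add` and `DecidableEq` instances on `Lex`
  convert h using 3
  rw [← card_image_of_injective (A + A) e.injective]
  convert congrArg card (image_add e)

theorem Finset.card_image_eq_card_image_of_eq_iff {ι α β : Type*} [DecidableEq α] [DecidableEq β]
    {D : Finset ι} {f : ι → α} {g : ι → β} (h : ∀ p ∈ D, ∀ q ∈ D, f p = f q ↔ g p = g q) :
    #(D.image f) = #(D.image g) := by
  set fg : ι → α × β := fun p => (f p, g p)
  have hf : D.image f = (D.image fg).image Prod.fst := by rw [image_image]; rfl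
  have hg : D.image g = (D.image fg).image Prod.snd := by rw [image_image]; rfl
  rw [hf, hg, card_image_of_injOn (f := Prod.fst), card_image_of_injOn (f := Prod.snd)] <;>
    rw [coe_image] <;> rintro _ ⟨p, hp, rfl⟩ _ ⟨q, hq, rfl⟩ hpq
  · exact Prod.ext ((h p hp q hq).2 hpq) hpq
  · exact Prod.ext hpq ((h p hp q hq).1 hpq)

section FreimanIso

variable {G H : Type*} [AddCommGroup G] [AddCommGroup H] {X : Finset G} {Y : Finset H} {φ : G → H}

theorem IsAddFreimanIso.card_eq {n : ℕ} (hφ : IsAddFreimanIso n (X : Set G) (Y : Set H) φ) :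
    #X = #Y :=
  card_nbij φ hφ.bijOn.mapsTo hφ.bijOn.injOn hφ.bijOn.surjOn

theorem IsAddFreimanIso.card_add_self_eq [DecidableEq G] [DecidableEq H]
    (hφ : IsAddFreimanIso 2 (X : Set G) (Y : Set H) φ) : #(X + X) = #(Y + Y) := by
  have hY : Y = X.image φ := by
    apply coe_injective
    rw [coe_image, hφ.bijOn.image_eq]
  rw [hY, add_def, add_def, ← prodMap_image_product, image_image]
  refine card_image_eq_card_image_of_eq_iff fun p hp q hq => ?_
  rw [mem_product] at hp hq
  exact (hφ.add_eq_add hp.1 hp.2 hq.1 hq.2).symm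

end FreimanIso

theorem freiman_lemma_int {N r : ℕ} (Y : Finset (Fin N → ℤ))
    (hr : finrank ℝ (affineSpan ℝ ((fun (y : Fin N → ℤ) (i : Fin N) => (y i : ℝ)) ''
      (Y : Set (Fin N → ℤ)))).direction = r) :
    2 * #Y * (r + 1) ≤ 2 * #(Y + Y) + r * (r + 1) := by
  set c : (Fin N → ℤ) →+ (Fin N → ℝ) := (Int.castAddHom ℝ).compLeft (Fin N)
  have hc : Function.Injective c := fun y z h => funext fun i => Int.cast_injective (congrFun h i)
  have hB : (fun (y : Fin N → ℤ) (i : Fin N) => (y i : ℝ)) '' (Y : Set (Fin N → ℤ))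
      = (Y.image c : Set (Fin N → ℝ)) := by
    rw [coe_image]; rfl
  rw [hB, direction_affineSpan] at hr
  have h := freiman_lemma_pi (Y.image c) hr
  rwa [← image_add c, card_image_of_injective _ hc, card_image_of_injective _ hc] at h

theorem Nat.sSup_eq_zero_or_mem (s : Set ℕ) : sSup s = 0 ∨ sSup s ∈ s := by
  by_cases hs : s.Nonempty
  · by_cases hb : BddAbove s
    · exact Or.inr (Nat.sSup_mem hs hb)
    · exact Or.inl (Nat.sSup_of_not_bddAbove hb)
  · rw [Set.not_nonempty_iff_eq_empty.1 hs, csSup_empty]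
    exact Or.inl rfl

theorem two_mul_card_mul_freimanDim_succ_le {G : Type*} [AddCommGroup G] [DecidableEq G]
    (X : Finset G) :
    2 * #X * (freimanDim X + 1) ≤ 2 * #(X + X) + freimanDim X * (freimanDim X + 1) := by
  obtain h | ⟨Y, φ, hφ, hd⟩ : freimanDim X = 0 ∨ freimanDim X ∈ _ := Nat.sSup_eq_zero_or_mem _
  · rw [h]
    simpa using card_le_card_add_self
  · have h := freiman_lemma_int Y hd
    rwa [← hφ.card_eq, ← hφ.card_add_self_eq] at h

theorem freiman_dim_le_doubling_general (n : ℕ) (X : Finset (ZMod n))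
    (hX : X.Nonempty) (σ : ℝ)
    (hσ : ((X + X).card : ℝ) ≤ σ * X.card)
    (hdim : freimanDim X ≤ X.card) :
    (freimanDim X : ℝ) + 1 ≤ 2 * σ := by
  set D := freimanDim X
  have hfreiman : 2 * (#X : ℝ) * (D + 1) ≤ 2 * #(X + X) + D * (D + 1) := by
    exact_mod_cast two_mul_card_mul_freimanDim_succ_le X
  have hpos : (0 : ℝ) < #X := by exact_mod_cast hX.card_pos
  have hD : (D : ℝ) * (D + 1) ≤ #X * (D + 1) := by gcongr
  refine le_of_mul_le_mul_right ?_ hpos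
  linarith

/-- If `X ⊆ ℤ/nℤ` is nonempty with `|X + X| ≤ σ|X|` and `|X| ≥ dim_F(X)`,
then `dim_F(X) + 1 ≤ 2σ`. -/
theorem freiman_dim_le_doubling (n : ℕ) (hn : n.Prime) (X : Finset (ZMod n))
    (hX : X.Nonempty) (σ : ℝ)
    (hσ : ((X + X).card : ℝ) ≤ σ * X.card)
    (hdim : freimanDim X ≤ X.card) :
    (freimanDim X : ℝ) + 1 ≤ 2 * σ :=
  freiman_dim_le_doubling_general n X hX σ hσ hdim
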